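/- Under the saw map setup, suppose x̂ ∈ J* satisfies Tⁿ(x̂) = x̂ for some n ≥ 1, and suppose there exists a < x̂ such that Tⁿ(a) = 0 and the iterate Tⁿ is affine on the segment [a, x̂]. Then x̂ ∈ Σ. -/

import Mathlib

/-- `T` is affine (linear) on the segment `[a, b]`. -/
def AffOn (T : ℝ → ℝ) (a b : ℝ) : Prop :=
  ∃ m c : ℝ, ∀ x ∈ Set.Icc a b, T x = m * x + c

/-- The "saw map" setup: sequences `q, r, p`, the map `T`, fixed points `e k ∈ (q (k+1), r k)`
and `ehat k ∈ (r k, q k)`, and the index `kstar`, subject to all standing assumptions. -/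
structure SawMapSetup where
  q : ℕ → ℝ
  r : ℕ → ℝ
  p : ℕ → ℝ
  T : ℝ → ℝ
  e : ℕ → ℝ
  ehat : ℕ → ℝ
  kstar : ℕ
  hq_pos : ∀ k, 1 ≤ k → 0 < q k
  hr_pos : ∀ k, 0 < r k
  hq1r0 : q 1 < r 0
  hrq : ∀ k, 1 ≤ k → r k < q k
  hqr : ∀ k, 1 ≤ k → q (k + 1) < r k
  hq_lim : Filter.Tendsto q Filter.atTop (nhds 0)
  hr_lim : Filter.Tendsto r Filter.atTop (nhds 0)
  hp_pos : ∀ k, 0 < p k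
  hp_dec : ∀ k, p (k + 1) < p k
  hp0r0 : p 0 < r 0
  hpr : ∀ k, 1 ≤ k → r k < p k
  hT0 : T 0 = 0
  hTq : ∀ k, 1 ≤ k → T (q k) = 0
  hTr : ∀ k, T (r k) = p k
  haff0 : AffOn T (q 1) (r 0)
  haff1 : ∀ k, 1 ≤ k → AffOn T (q (k + 1)) (r k)
  haff2 : ∀ k, 1 ≤ k → AffOn T (r k) (q k)
  hTJ : Set.MapsTo T (Set.Icc 0 (r 0)) (Set.Icc 0 (r 0))
  halpha1 : ∀ k, 1 ≤ k → 1 < p k / (r k - q (k + 1))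
  he_mem : ∀ k, 1 ≤ k → e k ∈ Set.Ioo (q (k + 1)) (r k)
  he_fix : ∀ k, 1 ≤ k → T (e k) = e k
  he_uniq : ∀ k, 1 ≤ k → ∀ x ∈ Set.Ioo (q (k + 1)) (r k), T x = x → x = e k
  hehat_mem : ∀ k, 1 ≤ k → ehat k ∈ Set.Ioo (r k) (q k)
  hehat_fix : ∀ k, 1 ≤ k → T (ehat k) = ehat k
  hehat_uniq : ∀ k, 1 ≤ k → ∀ x ∈ Set.Ioo (r k) (q k), T x = x → x = ehat k
  halpha_mono : ∀ k, p k / (r k - q (k + 1)) < p (k + 1) / (r (k + 1) - q (k + 2))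
  hbeta_mono : ∀ k, 1 ≤ k → p k / (q k - r k) < p (k + 1) / (q (k + 1) - r (k + 1))
  hkstar : 1 ≤ kstar
  hp_e_big : ∀ k, kstar + 1 ≤ k → e (k - 1) < p k
  hp_e_small : 2 ≤ kstar → ∀ k, 2 ≤ k → k ≤ kstar → p k < e (k - 1)
  htech : ∀ k, 1 ≤ k → k < kstar → p k < q k + e k / (p (k - 1) / (r (k - 1) - q k))

namespace SawMapSetup

variable (S : SawMapSetup)

/-- Absolute value of the slope of `T` on `[q (k+1), r k]`. -/
noncomputable def alpha (k : ℕ) : ℝ := S.p k / (S.r k - S.q (k + 1))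

/-- Absolute value of the slope of `T` on `[r k, q k]`. -/
noncomputable def beta (k : ℕ) : ℝ := S.p k / (S.q k - S.r k)

/-- The invariant segment `J* = [0, p kstar]`. -/
def Jstar : Set ℝ := Set.Icc 0 (S.p S.kstar)

/-- The segment `J_k = [e k, p k]`. -/
def Jk (k : ℕ) : Set ℝ := Set.Icc (S.e k) (S.p k)

/-- The segment `G_k = [T (p k), p k]`. -/
def Gk (k : ℕ) : Set ℝ := Set.Icc (S.T (S.p k)) (S.p k)

/-- The set `Ω` of points of `J*` that are eventually mapped to `0`. -/
def Omega : Set ℝ := {x | x ∈ S.Jstar ∧ ∃ n, 1 ≤ n ∧ S.T^[n] x = 0}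

/-- The set `Σ`, the closure of `Ω`. -/
def Sig : Set ℝ := closure S.Omega

end SawMapSetup


open Set Filter Topology

/-!
If `a ≤ 0`, the affine map `Tⁿ` fixes both `0` and `x̂`, so it is the identity on `[0, x̂]`;
this is impossible because `Tⁿ` kills the points `q k ∈ (0, x̂)`. If `a > 0`, the slope of `Tⁿ`
on `[a, x̂]` is `x̂ / (x̂ - a) > 1`, so the inverse branch is a contraction of `[a, x̂]` towards
`x̂`; the backward orbit of `a` under it consists of points eventually mapped to `0` and
converges to `x̂`.
-/

section AffOn

variable {f : ℝ → ℝ} {a b : ℝ}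

theorem AffOn.eqOn_id {u v : ℝ} (h : AffOn f a b) (hu : u ∈ Icc a b) (hv : v ∈ Icc a b)
    (huv : u ≠ v) (hfu : f u = u) (hfv : f v = v) : EqOn f id (Icc a b) := by
  obtain ⟨m, c, hmc⟩ := h
  have hu' : m * u + c = u := (hmc u hu).symm.trans hfu
  have hv' : m * v + c = v := (hmc v hv).symm.trans hfv
  have hm : m = 1 := by
    have : (m - 1) * (u - v) = 0 := by linear_combination hu' - hv'
    simpa [sub_eq_zero, huv] using this
  have hc : c = 0 := by linear_combination hu' - u * hm
  intro y hy
  rw [hmc y hy, id, hm, hc]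
  ring

theorem AffOn.sub_apply_eq (h : AffOn f a b) (hab : a < b) (hfa : f a = 0) (hfb : f b = b)
    {y : ℝ} (hy : y ∈ Icc a b) : b - f y = (b - y) * (b / (b - a)) := by
  obtain ⟨m, c, hmc⟩ := h
  have ha' : m * a + c = 0 := (hmc a ⟨le_rfl, hab.le⟩).symm.trans hfa
  have hb' : m * b + c = b := (hmc b ⟨hab.le, le_rfl⟩).symm.trans hfb
  have hm : m = b / (b - a) := by
    rw [eq_div_iff (sub_ne_zero.mpr hab.ne')]
    linear_combination hb' - ha'
  rw [hmc y hy, ← hm]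
  linear_combination -hb'

/-- The points `b - (b - a) ρᵏ` with `ρ = (b - a) / b` form the backward orbit of `a` under
the expanding branch `f`, and they accumulate at `b`. -/
theorem AffOn.right_mem_closure_iterate_eq_zero (h : AffOn f a b) (ha : 0 < a) (hab : a < b)
    (hfa : f a = 0) (hfb : f b = b) :
    b ∈ closure {y ∈ Icc a b | ∃ k : ℕ, f^[k + 1] y = 0} := by
  have hb : 0 < b := ha.trans hab
  set ρ := (b - a) / b
  have hρ0 : 0 < ρ := div_pos (sub_pos.mpr hab) hb
  have hρ1 : ρ < 1 := (div_lt_one hb).mpr (by linarith)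
  set y : ℕ → ℝ := fun k => b - (b - a) * ρ ^ k
  have hy_mem : ∀ k, y k ∈ Icc a b := fun k => by
    have h0 : 0 ≤ (b - a) * ρ ^ k := by positivity
    have h1 : (b - a) * ρ ^ k ≤ b - a :=
      mul_le_of_le_one_right (sub_pos.mpr hab).le (pow_le_one₀ hρ0.le hρ1.le)
    constructor <;> simp only [y] <;> linarith
  have hy_step : ∀ k, f (y (k + 1)) = y k := fun k => by
    have hstep := h.sub_apply_eq hab hfa hfb (hy_mem (k + 1))
    have hρb : ρ * (b / (b - a)) = 1 := by
      simp only [ρ]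
      field_simp [hb.ne', (sub_pos.mpr hab).ne']
    simp only [y, pow_succ] at hstep ⊢
    linear_combination -hstep - (b - a) * ρ ^ k * hρb
  have hy_zero : ∀ k, f^[k + 1] (y k) = 0 := fun k => by
    induction k with
    | zero => simpa [y] using hfa
    | succ k ih => rw [Function.iterate_succ_apply, hy_step, ih]
  have hy_lim : Tendsto y atTop (𝓝 b) := by
    simpa [y] using tendsto_const_nhds.sub
      ((tendsto_pow_atTop_nhds_zero_of_lt_one hρ0.le hρ1).const_mul (b - a))
  exact mem_closure_of_tendsto hy_lim (Eventually.of_forall fun k => ⟨hy_mem k, k, hy_zero k⟩)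

end AffOn

namespace SawMapSetup

variable (S : SawMapSetup)

theorem iterate_T_zero (n : ℕ) : S.T^[n] 0 = 0 :=
  Function.iterate_fixed S.hT0 n

theorem iterate_T_q {k n : ℕ} (hk : 1 ≤ k) (hn : 1 ≤ n) : S.T^[n] (S.q k) = 0 := by
  obtain ⟨n, rfl⟩ := Nat.exists_eq_add_of_le' hn
  rw [Function.iterate_succ_apply, S.hTq k hk, S.iterate_T_zero]

theorem exists_mem_Ioo_iterate_T_ne {x : ℝ} (hx : 0 < x) {n : ℕ} (hn : 1 ≤ n) :
    ∃ y ∈ Ioo 0 x, S.T^[n] y ≠ y := by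
  obtain ⟨k, hkx, hk⟩ :=
    ((S.hq_lim.eventually (gt_mem_nhds hx)).and (eventually_ge_atTop 1)).exists
  have hqk := S.hq_pos k hk
  exact ⟨S.q k, ⟨hqk, hkx⟩, by rw [S.iterate_T_q hk hn]; exact hqk.ne⟩

end SawMapSetup

/-- Under the saw map setup, if `x̂ ∈ J*` is a periodic point (`T^[n] x̂ = x̂`, `n ≥ 1`) and
there is `a < x̂` with `T^[n] a = 0` such that `T^[n]` is affine on `[a, x̂]`, then `x̂ ∈ Σ`. -/
theorem periodic_point_mem_Sig (S : SawMapSetup) (xhat : ℝ) (hx : xhat ∈ S.Jstar)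
    (n : ℕ) (hn : 1 ≤ n) (hfix : S.T^[n] xhat = xhat)
    (a : ℝ) (ha : a < xhat) (haz : S.T^[n] a = 0) (haff : AffOn (S.T^[n]) a xhat) :
    xhat ∈ S.Sig := by
  rcases hx.1.eq_or_lt with hzero | hpos
  · exact subset_closure ⟨hx, n, hn, hfix.trans hzero.symm⟩
  rcases le_or_gt a 0 with ha0 | ha0
  · exfalso
    obtain ⟨y, hy, hne⟩ := S.exists_mem_Ioo_iterate_T_ne hpos hn
    exact hne (haff.eqOn_id ⟨ha0, hpos.le⟩ ⟨ha.le, le_rfl⟩ hpos.ne (S.iterate_T_zero n) hfix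
      ⟨ha0.trans hy.1.le, hy.2.le⟩)
  refine closure_mono ?_ (haff.right_mem_closure_iterate_eq_zero ha0 ha haz hfix)
  rintro y ⟨hy, k, hk⟩
  refine ⟨⟨ha0.le.trans hy.1, hy.2.trans hx.2⟩, n * (k + 1), ?_, ?_⟩
  · exact hn.trans (Nat.le_mul_of_pos_right n k.succ_pos)
  · rwa [Function.iterate_mul]
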